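/- For every integer n ≥ 2, the following identity holds in ℤ[q]: [2n−1 choose n−2]_q = ∑_{r=1}^{⌊(n+1)/2⌋} (−1)^{r−1} · q^{r²−r} · [n−1 choose r]_{q²} · [2n−2r−1 choose n−2]_q. -/

import Mathlib

/-!
Write `x` for a power-series variable over `ℤ[q]` and `m = n - 2`. The q-binomial theorem
expands `∏_{j ≤ m} (1 - q^{2j} x²)` as `∑_k (-1)^k q^{k²-k} [m+1 choose k]_{q²} x^{2k}`, and
`1 / ∏_{j ≤ m} (1 - q^j x) = ∑_N [N+m choose m]_q x^N`. Since
`1 - q^{2j} x² = (1 - q^j x)(1 + q^j x)`, the product of these two series is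
`∏_{j ≤ m} (1 + q^j x)`, a polynomial of degree `m + 1` in `x`. Its coefficient of `x^{m+3}`
therefore vanishes; that vanishing sum is the identity, its `k = 0` term being
`[2m+3 choose m]_q = [2n-1 choose n-2]_q`.
-/

open Polynomial

/-- The q-integer `[n]_q = 1 + q + ⋯ + q^{n−1}` as a polynomial in `ℤ[q]`
(with `[0]_q = 0`). -/
noncomputable def qIntP (n : ℕ) : Polynomial ℤ := ∑ i ∈ Finset.range n, Polynomial.X ^ i

/-- The q-factorial `[n]_q! = [1]_q[2]_q⋯[n]_q` in `ℤ[q]`. -/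
noncomputable def qFactP (n : ℕ) : Polynomial ℤ := ∏ i ∈ Finset.range n, qIntP (i + 1)

/-- The Gaussian binomial coefficient `[m choose k]_q = [m]_q!/([k]_q![m−k]_q!)`
as a polynomial in `ℤ[q]` (the division, by a monic polynomial, is exact),
and `0` if `k > m`. -/
noncomputable def qBinomP (m k : ℕ) : Polynomial ℤ :=
  if k ≤ m then qFactP m /ₘ (qFactP k * qFactP (m - k)) else 0

/-- The Gaussian binomial coefficient `[m choose k]_{q²}`, i.e. `[m choose k]_q`
with `q` replaced by `q²`. -/
noncomputable def qBinomP2 (m k : ℕ) : Polynomial ℤ := (qBinomP m k).comp (Polynomial.X ^ 2)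

open Finset

def gaussBinom {R : Type*} [CommRing R] (u : R) : ℕ → ℕ → R
  | _, 0 => 1
  | 0, _ + 1 => 0
  | m + 1, k + 1 => gaussBinom u m (k + 1) * u ^ (k + 1) + gaussBinom u m k

namespace gaussBinom

variable {R S : Type*} [CommRing R] [CommRing S] (u : R)

@[simp] lemma zero_right (m : ℕ) : gaussBinom u m 0 = 1 := by cases m <;> rfl

@[simp] lemma zero_succ (k : ℕ) : gaussBinom u 0 (k + 1) = 0 := rfl

lemma succ_succ (m k : ℕ) :
    gaussBinom u (m + 1) (k + 1) = gaussBinom u m (k + 1) * u ^ (k + 1) + gaussBinom u m k :=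
  rfl

lemma eq_zero_of_lt {m k : ℕ} (h : m < k) : gaussBinom u m k = 0 := by
  induction m generalizing k with
  | zero => obtain ⟨j, rfl⟩ := Nat.exists_eq_succ_of_ne_zero h.ne'; rfl
  | succ m ih =>
    obtain ⟨j, rfl⟩ := Nat.exists_eq_succ_of_ne_zero (Nat.ne_zero_of_lt h)
    rw [succ_succ, ih (by omega), ih (by omega), zero_mul, zero_add]

@[simp] lemma self (m : ℕ) : gaussBinom u m m = 1 := by
  induction m with
  | zero => rfl
  | succ m ih => rw [succ_succ, eq_zero_of_lt u m.lt_succ_self, ih, zero_mul, zero_add]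

lemma map (φ : R →+* S) (m k : ℕ) : φ (gaussBinom u m k) = gaussBinom (φ u) m k := by
  induction m generalizing k with
  | zero => cases k <;> simp
  | succ m ih => cases k <;> simp [succ_succ, ih]

/-- The finite q-binomial theorem. -/
theorem prod_one_add_pow_mul (m : ℕ) (y : R) :
    ∏ j ∈ range m, (1 + u ^ j * y) =
      ∑ k ∈ range (m + 1), u ^ k.choose 2 * gaussBinom u m k * y ^ k := by
  induction m generalizing y with
  | zero => simp
  | succ m ih =>
    set t : ℕ → R := fun k => u ^ k.choose 2 * gaussBinom u m k * (u * y) ^ k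
    have hsplit : ∀ k, u ^ (k + 1).choose 2 * gaussBinom u (m + 1) (k + 1) * y ^ (k + 1) =
        t (k + 1) + y * t k := by
      intro k
      simp only [t, succ_succ, Nat.choose_succ_succ', Nat.choose_one_right]
      ring
    have htop : t (m + 1) = 0 := by simp [t, eq_zero_of_lt u m.lt_succ_self]
    calc ∏ j ∈ range (m + 1), (1 + u ^ j * y)
        = (∑ k ∈ range (m + 1), t k) * (1 + y) := by
          rw [prod_range_succ', ← ih]
          simp [pow_succ, mul_assoc, mul_left_comm]
      _ = ∑ k ∈ range (m + 1), (t (k + 1) + y * t k) + t 0 := by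
          rw [sum_add_distrib, ← mul_sum, add_right_comm, ← sum_range_succ' t,
            sum_range_succ t (m + 1), htop]
          ring
      _ = _ := by
          rw [sum_range_succ' _ (m + 1)]
          simp [hsplit, t]

end gaussBinom

lemma qIntP_add (a b : ℕ) : qIntP (a + b) = qIntP a + X ^ a * qIntP b := by
  simp [qIntP, sum_range_add, mul_sum, pow_add]

lemma qFactP_succ (n : ℕ) : qFactP (n + 1) = qFactP n * qIntP (n + 1) :=
  prod_range_succ _ n

lemma qFactP_monic (n : ℕ) : (qFactP n).Monic :=
  monic_prod_of_monic _ _ fun i _ => monic_geom_sum_X i.succ_ne_zero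

lemma gaussBinom_add_mul_qFactP (m k : ℕ) :
    gaussBinom X (m + k) k * (qFactP k * qFactP m) = qFactP (m + k) := by
  induction k generalizing m with
  | zero => simp [qFactP]
  | succ k ihk =>
    induction m with
    | zero => simp [qFactP]
    | succ m ihm =>
      have ihk' := ihk (m + 1)
      rw [show m + (k + 1) = m + 1 + k by omega, qFactP_succ k] at ihm
      rw [qFactP_succ m] at ihk'
      have hq : qIntP (m + 1 + k + 1) = qIntP (k + 1) + X ^ (k + 1) * qIntP (m + 1) := by
        rw [← qIntP_add]; ring_nf
      rw [show m + 1 + (k + 1) = m + 1 + k + 1 by omega, gaussBinom.succ_succ, qFactP_succ k,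
        qFactP_succ m, qFactP_succ (m + 1 + k), hq]
      linear_combination (X ^ (k + 1) * qIntP (m + 1)) * ihm + qIntP (k + 1) * ihk'

lemma qBinomP_eq_gaussBinom (m k : ℕ) : qBinomP m k = gaussBinom X m k := by
  rcases le_or_gt k m with h | h
  · obtain ⟨m, rfl⟩ := Nat.exists_eq_add_of_le' h
    rw [qBinomP, if_pos h, Nat.add_sub_cancel, ← gaussBinom_add_mul_qFactP, mul_comm]
    exact mul_divByMonic_cancel_left _ ((qFactP_monic k).mul (qFactP_monic m))
  · rw [qBinomP, if_neg h.not_ge, gaussBinom.eq_zero_of_lt _ h]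

lemma qBinomP2_eq_gaussBinom (m k : ℕ) : qBinomP2 m k = gaussBinom (X ^ 2) m k := by
  rw [qBinomP2, qBinomP_eq_gaussBinom, ← coe_compRingHom_apply, gaussBinom.map,
    coe_compRingHom_apply, X_comp]

section PowerSeries

variable {R : Type*} [CommRing R]

lemma PowerSeries.coeff_one_sub_C_mul_X_mul (c : R) (φ : PowerSeries R) (n : ℕ) :
    PowerSeries.coeff n ((1 - PowerSeries.C c * PowerSeries.X) * φ) =
      PowerSeries.coeff n φ - if n = 0 then 0 else c * PowerSeries.coeff (n - 1) φ := by
  cases n <;> simp [sub_mul, mul_assoc, PowerSeries.coeff_succ_X_mul]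

noncomputable def gaussBinomSeries (u : R) (k : ℕ) : PowerSeries R :=
  PowerSeries.mk fun n => gaussBinom u (n + k) k

lemma one_sub_C_pow_mul_X_mul_gaussBinomSeries_succ (u : R) (k : ℕ) :
    (1 - PowerSeries.C (u ^ (k + 1)) * PowerSeries.X) * gaussBinomSeries u (k + 1) =
      gaussBinomSeries u k := by
  ext (_ | n)
  · simp [gaussBinomSeries]
  · simp only [gaussBinomSeries, PowerSeries.coeff_one_sub_C_mul_X_mul, PowerSeries.coeff_mk,
      Nat.add_one_ne_zero, if_false, Nat.add_sub_cancel]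
    rw [show n + 1 + (k + 1) = n + 1 + k + 1 by omega, gaussBinom.succ_succ,
      show n + (k + 1) = n + 1 + k by omega]
    ring

lemma prod_one_sub_C_pow_mul_X_mul_gaussBinomSeries (u : R) (k : ℕ) :
    (∏ i ∈ range (k + 1), (1 - PowerSeries.C (u ^ i) * PowerSeries.X)) *
      gaussBinomSeries u k = 1 := by
  induction k with
  | zero =>
    ext n
    rw [prod_range_one, PowerSeries.coeff_one_sub_C_mul_X_mul]
    cases n <;> simp [gaussBinomSeries, PowerSeries.coeff_one]
  | succ k ih =>
    rw [prod_range_succ, mul_assoc, one_sub_C_pow_mul_X_mul_gaussBinomSeries_succ, ih]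

lemma prod_one_sub_C_sq_pow_mul_X_sq_mul_gaussBinomSeries (u : R) (m : ℕ) :
    (∏ j ∈ range (m + 1), (1 + PowerSeries.C (u ^ 2) ^ j * -PowerSeries.X ^ 2)) *
      gaussBinomSeries u m = ∏ j ∈ range (m + 1), (1 + PowerSeries.C u ^ j * PowerSeries.X) := by
  have hfactor : ∏ j ∈ range (m + 1), (1 + PowerSeries.C (u ^ 2) ^ j * -PowerSeries.X ^ 2) =
      (∏ j ∈ range (m + 1), (1 - PowerSeries.C (u ^ j) * PowerSeries.X)) *
        ∏ j ∈ range (m + 1), (1 + PowerSeries.C u ^ j * PowerSeries.X) := by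
    rw [← prod_mul_distrib]
    refine prod_congr rfl fun j _ => ?_
    simp only [map_pow]
    ring
  rw [hfactor, mul_right_comm, prod_one_sub_C_pow_mul_X_mul_gaussBinomSeries, one_mul]

theorem sum_filter_neg_one_pow_mul_gaussBinom_sq_mul_gaussBinom (u : R) {m N : ℕ}
    (hN : m + 2 ≤ N) :
    ∑ k ∈ range (m + 2) with 2 * k ≤ N,
      (-1) ^ k * (u ^ 2) ^ k.choose 2 * gaussBinom (u ^ 2) (m + 1) k *
        gaussBinom u (N - 2 * k + m) m = 0 := by
  have hC (w : R) (a b : ℕ) :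
      gaussBinom (PowerSeries.C w) a b = PowerSeries.C (gaussBinom w a b) :=
    (gaussBinom.map w _ a b).symm
  have hL (k : ℕ) : PowerSeries.coeff N (PowerSeries.C (u ^ 2) ^ k.choose 2 *
      gaussBinom (PowerSeries.C (u ^ 2)) (m + 1) k * (-PowerSeries.X ^ 2) ^ k *
        gaussBinomSeries u m) =
      if 2 * k ≤ N then (-1) ^ k * (u ^ 2) ^ k.choose 2 * gaussBinom (u ^ 2) (m + 1) k *
        gaussBinom u (N - 2 * k + m) m else 0 := by
    have hterm : PowerSeries.C (u ^ 2) ^ k.choose 2 *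
        gaussBinom (PowerSeries.C (u ^ 2)) (m + 1) k * (-PowerSeries.X ^ 2) ^ k *
          gaussBinomSeries u m = PowerSeries.C ((-1) ^ k * (u ^ 2) ^ k.choose 2 *
            gaussBinom (u ^ 2) (m + 1) k) * (PowerSeries.X ^ (2 * k) * gaussBinomSeries u m) := by
      rw [hC]
      simp only [map_mul, map_pow, map_neg, map_one]
      ring
    rw [hterm, PowerSeries.coeff_C_mul, PowerSeries.coeff_X_pow_mul', mul_ite, mul_zero]
    simp [gaussBinomSeries]
  have hR (k : ℕ) (hk : k ∈ range (m + 2)) : PowerSeries.coeff N (PowerSeries.C u ^ k.choose 2 *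
      gaussBinom (PowerSeries.C u) (m + 1) k * PowerSeries.X ^ k) = 0 := by
    rw [hC, ← map_pow, ← map_mul, PowerSeries.coeff_C_mul_X_pow, if_neg (by simp at hk; omega)]
  have hcoeff := congrArg (PowerSeries.coeff N)
    (prod_one_sub_C_sq_pow_mul_X_sq_mul_gaussBinomSeries u m)
  rw [gaussBinom.prod_one_add_pow_mul, gaussBinom.prod_one_add_pow_mul, sum_mul, map_sum,
    map_sum, sum_congr rfl hR, sum_const_zero] at hcoeff
  simpa only [sum_filter, hL] using hcoeff

end PowerSeries

lemma Nat.two_mul_choose_two (r : ℕ) : 2 * r.choose 2 = r ^ 2 - r := by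
  rw [Nat.choose_two_right, Nat.mul_div_cancel' (Nat.even_mul_pred_self r).two_dvd, sq,
    Nat.mul_sub_one]

/-- For every `n ≥ 2`, the identity in `ℤ[q]`:
`[2n−1 choose n−2]_q = ∑_{r=1}^{⌊(n+1)/2⌋} (−1)^{r−1}·q^{r²−r}·
  [n−1 choose r]_{q²}·[2n−2r−1 choose n−2]_q`. -/
theorem qbinom_sieve_identity (n : ℕ) (hn : 2 ≤ n) :
    qBinomP (2 * n - 1) (n - 2) =
      ∑ r ∈ Finset.Icc 1 ((n + 1) / 2),
        (-1 : Polynomial ℤ) ^ (r - 1) * Polynomial.X ^ (r ^ 2 - r) *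
          qBinomP2 (n - 1) r * qBinomP (2 * n - 2 * r - 1) (n - 2) := by
  obtain ⟨m, rfl⟩ := Nat.exists_eq_add_of_le' hn
  have hkey := sum_filter_neg_one_pow_mul_gaussBinom_sq_mul_gaussBinom (X : ℤ[X])
    (show m + 2 ≤ m + 3 by omega)
  have hsupp : {k ∈ range (m + 2) | 2 * k ≤ m + 3} = insert 0 (Icc 1 ((m + 3) / 2)) := by
    ext k; simp; omega
  rw [hsupp, sum_insert (by simp), add_eq_zero_iff_eq_neg, ← sum_neg_distrib] at hkey
  simp only [qBinomP_eq_gaussBinom, qBinomP2_eq_gaussBinom, Nat.add_sub_cancel,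
    show m + 2 - 1 = m + 1 from rfl]
  convert hkey using 1
  · rw [show m + 3 - 2 * 0 + m = 2 * (m + 2) - 1 by omega]
    simp
  · refine sum_congr rfl fun r hr => ?_
    obtain ⟨s, rfl⟩ := Nat.exists_eq_add_of_le' (mem_Icc.mp hr).1
    rw [← Nat.two_mul_choose_two, pow_mul,
      show 2 * (m + 2) - 2 * (s + 1) - 1 = m + 3 - 2 * (s + 1) + m by simp at hr; omega]
    simp only [Nat.add_sub_cancel, pow_succ]
    ring
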